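/- arXiv:0805.3888 — 5 statements merged into one kernel-verified Lean document; each statement's English description precedes it below -/
import Mathlib

section
/- For every z ∈ ℂ with z ≠ 0, G is twice real-Fréchet differentiable at z, and there exists a constant C₁ > 0 (depending only on C₀, α₁, α₂) such that the operator norm of the second derivative satisfies ‖D²G(z)‖ ≤ C₁(|z|^{α₁} + |z|^{α₂}) for all z ∈ ℂ, z ≠ 0. -/
/-!
Away from the origin `G(w) = φ(‖w‖) • w` with `φ(r) = g(r)/r`, so
`DG(z) = φ(r) • id + (φ'(r)/r) ⟪z, ·⟫ z` with `r = ‖z‖`, and differentiating once more gives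
`‖D²G(z)‖ ≤ |g''(r)| + 6 |g'(r)|/r + 6 |g(r)|/r²`.
Since `g(0) = g'(0) = 0`, the mean value theorem applied twice bounds `|g'(r)| ≤ M r` and
`|g(r)| ≤ M r²`, where `M = C₀(r^α₁ + r^α₂)` dominates `|g''|` on `[0, r]` because `s ↦ s^α` is
monotone. Hence `‖D²G(z)‖ ≤ 13 C₀ (‖z‖^α₁ + ‖z‖^α₂)`.
-/

open Set Filter Topology

section RadialMaps

variable {E : Type*} [NormedAddCommGroup E] [InnerProductSpace ℝ E]

theorem hasFDerivAt_norm_of_ne_zero {z : E} (hz : z ≠ 0) :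
    HasFDerivAt (‖·‖) (‖z‖⁻¹ • innerSL ℝ z) z := by
  have hsq : HasFDerivAt (fun w : E => ‖w‖ ^ 2) (2 • innerSL ℝ z) z := by
    simpa using (hasFDerivAt_id z).norm_sq
  have h := (Real.hasDerivAt_sqrt (by positivity : ‖z‖ ^ 2 ≠ 0)).comp_hasFDerivAt z hsq
  simp only [Function.comp_def, Real.sqrt_sq (norm_nonneg _)] at h
  refine h.congr_fderiv ?_
  rw [← ofNat_smul_eq_nsmul ℝ 2, smul_smul]
  congr 1
  field_simp

theorem HasDerivAt.hasFDerivAt_comp_norm {φ : ℝ → ℝ} {φ' : ℝ} {z : E} (hφ : HasDerivAt φ φ' ‖z‖)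
    (hz : z ≠ 0) : HasFDerivAt (fun w : E => φ ‖w‖) ((φ' / ‖z‖) • innerSL ℝ z) z := by
  refine (hφ.comp_hasFDerivAt z (hasFDerivAt_norm_of_ne_zero hz)).congr_fderiv ?_
  rw [smul_smul, div_eq_mul_inv]

theorem norm_div_norm_smul_innerSL {z : E} (hz : z ≠ 0) (c : ℝ) :
    ‖(c / ‖z‖) • innerSL ℝ z‖ = |c| := by
  rw [norm_smul, innerSL_apply_norm, Real.norm_eq_abs, abs_div, abs_norm,
    div_mul_cancel₀ _ (norm_ne_zero_iff.mpr hz)]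

theorem HasDerivAt.hasFDerivAt_radial_smul {φ : ℝ → ℝ} {φ' : ℝ} {z : E}
    (hφ : HasDerivAt φ φ' ‖z‖) (hz : z ≠ 0) :
    HasFDerivAt (fun w : E => φ ‖w‖ • w)
      (φ ‖z‖ • ContinuousLinearMap.id ℝ E + (φ' / ‖z‖) • (innerSL ℝ z).smulRight z) z := by
  refine ((hφ.hasFDerivAt_comp_norm hz).smul (hasFDerivAt_id z)).congr_fderiv ?_
  ext w
  simp [smul_smul]

theorem exists_hasFDerivAt_innerSL_smulRight_self (z : E) :
    ∃ T : E →L[ℝ] E →L[ℝ] E, HasFDerivAt (fun w : E => (innerSL ℝ w).smulRight w) T z ∧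
      ‖T‖ ≤ 2 * ‖z‖ := by
  have hbil := isBoundedBilinearMap_smulRight (𝕜 := ℝ) (E := E) (F := E)
  have hpair : HasFDerivAt (fun w : E => (innerSL ℝ w, w))
      ((innerSL ℝ (E := E)).prod (ContinuousLinearMap.id ℝ E)) z :=
    ((innerSL ℝ (E := E)).prod (ContinuousLinearMap.id ℝ E)).hasFDerivAt
  refine ⟨_, HasFDerivAt.comp (f := fun w : E => (innerSL ℝ w, w)) z
    (hbil.hasFDerivAt (innerSL ℝ z, z)) hpair, ?_⟩
  refine ContinuousLinearMap.opNorm_le_bound _ (by positivity) fun v => ?_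
  simp only [ContinuousLinearMap.comp_apply, ContinuousLinearMap.prod_apply,
    ContinuousLinearMap.id_apply, IsBoundedBilinearMap.deriv_apply]
  calc ‖(innerSL ℝ z).smulRight v + (innerSL ℝ v).smulRight z‖
      ≤ ‖(innerSL ℝ z).smulRight v‖ + ‖(innerSL ℝ v).smulRight z‖ := norm_add_le _ _
    _ = 2 * ‖z‖ * ‖v‖ := by
      rw [ContinuousLinearMap.norm_smulRight_apply, ContinuousLinearMap.norm_smulRight_apply,
        innerSL_apply_norm, innerSL_apply_norm]
      ring

theorem exists_hasFDerivAt_radial_le {a b : ℝ → ℝ} {a' b' : ℝ} {z : E}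
    (ha : HasDerivAt a a' ‖z‖) (hb : HasDerivAt b b' ‖z‖) (hz : z ≠ 0) :
    ∃ B : E →L[ℝ] E →L[ℝ] E,
      HasFDerivAt (fun w : E => a ‖w‖ • ContinuousLinearMap.id ℝ E +
        b ‖w‖ • (innerSL ℝ w).smulRight w) B z ∧
      ‖B‖ ≤ |a'| + 2 * ‖z‖ * |b ‖z‖| + ‖z‖ ^ 2 * |b'| := by
  obtain ⟨T, hT, hTle⟩ := exists_hasFDerivAt_innerSL_smulRight_self z
  have hA := (ha.hasFDerivAt_comp_norm hz).smul
    (hasFDerivAt_const (ContinuousLinearMap.id ℝ E) z)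
  have hB := (hb.hasFDerivAt_comp_norm hz).smul hT
  refine ⟨_, hA.add hB, ?_⟩
  simp only [smul_zero, zero_add]
  have hnA : ‖((a' / ‖z‖) • innerSL ℝ z).smulRight (ContinuousLinearMap.id ℝ E)‖ ≤ |a'| := by
    rw [ContinuousLinearMap.norm_smulRight_apply, norm_div_norm_smul_innerSL hz]
    exact mul_le_of_le_one_right (abs_nonneg _) ContinuousLinearMap.norm_id_le
  have hnB : ‖b ‖z‖ • T‖ ≤ 2 * ‖z‖ * |b ‖z‖| := by
    refine (ContinuousLinearMap.opNorm_smul_le (b ‖z‖) T).trans ?_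
    rw [Real.norm_eq_abs, mul_comm]
    gcongr
  have hnC : ‖((b' / ‖z‖) • innerSL ℝ z).smulRight ((innerSL ℝ z).smulRight z)‖ =
      ‖z‖ ^ 2 * |b'| := by
    rw [ContinuousLinearMap.norm_smulRight_apply, norm_div_norm_smul_innerSL hz,
      ContinuousLinearMap.norm_smulRight_apply, innerSL_apply_norm]
    ring
  have hBC := norm_add_le (b ‖z‖ • T)
    (((b' / ‖z‖) • innerSL ℝ z).smulRight ((innerSL ℝ z).smulRight z))
  have hABC := norm_add_le (((a' / ‖z‖) • innerSL ℝ z).smulRight (ContinuousLinearMap.id ℝ E))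
    (b ‖z‖ • T + ((b' / ‖z‖) • innerSL ℝ z).smulRight ((innerSL ℝ z).smulRight z))
  linarith

noncomputable def gaugeFDeriv (g : ℝ → ℝ) (z : E) : E →L[ℝ] E :=
  (g ‖z‖ / ‖z‖) • ContinuousLinearMap.id ℝ E +
    (deriv g ‖z‖ / ‖z‖ ^ 2 - g ‖z‖ / ‖z‖ ^ 3) • (innerSL ℝ z).smulRight z

theorem hasFDerivAt_gauge {g : ℝ → ℝ} {z : E} (hg : DifferentiableAt ℝ g ‖z‖) (hz : z ≠ 0) :
    HasFDerivAt (fun w : E => (g ‖w‖ / ‖w‖) • w) (gaugeFDeriv g z) z := by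
  have hr : ‖z‖ ≠ 0 := norm_ne_zero_iff.mpr hz
  refine ((hg.hasDerivAt.div (hasDerivAt_id _) hr).hasFDerivAt_radial_smul hz).congr_fderiv ?_
  rw [gaugeFDeriv]
  congr 2
  simp only [id]
  field_simp

theorem exists_hasFDerivAt_gaugeFDeriv_le {g : ℝ → ℝ} {z : E} (hg : DifferentiableAt ℝ g ‖z‖)
    (hg' : DifferentiableAt ℝ (deriv g) ‖z‖) (hz : z ≠ 0) :
    ∃ B : E →L[ℝ] E →L[ℝ] E, HasFDerivAt (gaugeFDeriv g) B z ∧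
      ‖B‖ ≤ |deriv (deriv g) ‖z‖| + 6 * (|deriv g ‖z‖| / ‖z‖) + 6 * (|g ‖z‖| / ‖z‖ ^ 2) := by
  set r := ‖z‖ with hr_def
  have hr : 0 < r := norm_pos_iff.mpr hz
  set u := deriv g r / r with hu_def
  set v := g r / r ^ 2 with hv_def
  have ha : HasDerivAt (fun s => g s / s) (u - v) r := by
    refine (hg.hasDerivAt.div (hasDerivAt_id' r) hr.ne').congr_deriv ?_
    rw [hu_def, hv_def]
    field_simp
  have hb : HasDerivAt (fun s => deriv g s / s ^ 2 - g s / s ^ 3)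
      ((deriv (deriv g) r - 3 * u + 3 * v) / r ^ 2) r := by
    refine ((hg'.hasDerivAt.div (hasDerivAt_pow 2 r) (by positivity)).sub
      (hg.hasDerivAt.div (hasDerivAt_pow 3 r) (by positivity))).congr_deriv ?_
    rw [hu_def, hv_def]
    field_simp
    ring
  obtain ⟨B, hB, hBle⟩ := exists_hasFDerivAt_radial_le ha hb hz
  rw [← hr_def] at hBle
  refine ⟨B, hB, hBle.trans ?_⟩
  have hbr : deriv g r / r ^ 2 - g r / r ^ 3 = (u - v) / r := by
    rw [hu_def, hv_def]
    field_simp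
  calc _ = 3 * |u - v| + |deriv (deriv g) r - 3 * u + 3 * v| := by
        rw [hbr, abs_div, abs_div, abs_of_pos hr, abs_of_pos (by positivity : 0 < r ^ 2)]
        field_simp
        ring
    _ ≤ _ := by
      have hu : |u| = |deriv g r| / r := by rw [abs_div, abs_of_pos hr]
      have hv : |v| = |g r| / r ^ 2 := by rw [abs_div, abs_of_pos (by positivity : 0 < r ^ 2)]
      rw [← hu, ← hv]
      have huv := abs_sub u v
      have h3 := abs_add_three (deriv (deriv g) r) (-(3 * u)) (3 * v)
      simp only [abs_neg, abs_mul, abs_of_pos (by norm_num : (0 : ℝ) < 3), ← sub_eq_add_neg] at h3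
      linarith

end RadialMaps

theorem abs_le_mul_of_abs_deriv_le {f : ℝ → ℝ} (hf : Differentiable ℝ f) (hf0 : f 0 = 0)
    {r M : ℝ} (hM : ∀ x ∈ Ico 0 r, |deriv f x| ≤ M) : ∀ x ∈ Icc 0 r, |f x| ≤ M * x := by
  intro x hx
  simpa [hf0] using norm_image_sub_le_of_norm_deriv_le_segment'
    (fun x _ => (hf x).hasDerivAt.hasDerivWithinAt) hM x hx

theorem abs_le_of_abs_deriv_deriv_le {g : ℝ → ℝ} (hg : Differentiable ℝ g)
    (hg' : Differentiable ℝ (deriv g)) (hg0 : g 0 = 0) (hg'0 : deriv g 0 = 0) {r M : ℝ}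
    (hr : 0 ≤ r) (hM : ∀ x ∈ Icc 0 r, |deriv (deriv g) x| ≤ M) :
    |deriv g r| ≤ M * r ∧ |g r| ≤ M * r ^ 2 := by
  have h1 := abs_le_mul_of_abs_deriv_le hg' hg'0 fun x hx => hM x (Ico_subset_Icc_self hx)
  refine ⟨h1 r ⟨hr, le_rfl⟩, ?_⟩
  have h0 := abs_le_mul_of_abs_deriv_le hg hg0 (M := M * r) fun x hx => by
    have hM0 : 0 ≤ M := (abs_nonneg _).trans (hM 0 ⟨le_rfl, hx.1.trans hx.2.le⟩)
    exact (h1 x (Ico_subset_Icc_self hx)).trans (by gcongr; exact hx.2.le)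
  simpa [sq, mul_assoc] using h0 r ⟨hr, le_rfl⟩

theorem stmt_1_general (α₁ α₂ C₀ : ℝ) (hα₁ : 1/2 < α₁) (hα : α₁ ≤ α₂) (hC₀ : 0 < C₀)
    (g : ℝ → ℝ) (hg : ContDiff ℝ 2 g)
    (hg0 : g 0 = 0) (hg'0 : deriv g 0 = 0)
    (hg'' : ∀ s : ℝ, |deriv (deriv g) s| ≤ C₀ * (|s| ^ α₁ + |s| ^ α₂))
    (G : ℂ → ℂ)
    (hGdef : ∀ z : ℂ, z ≠ 0 → G z = (z / (‖z‖ : ℂ)) * (g (‖z‖) : ℂ)) :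
    (∀ z : ℂ, z ≠ 0 → DifferentiableAt ℝ G z ∧ DifferentiableAt ℝ (fderiv ℝ G) z) ∧
    ∃ C₁ > 0, ∀ z : ℂ, z ≠ 0 →
      ‖fderiv ℝ (fderiv ℝ G) z‖ ≤ C₁ * (‖z‖ ^ α₁ + ‖z‖ ^ α₂) := by
  have hgd : Differentiable ℝ g := hg.differentiable (by norm_num)
  have hg'd : Differentiable ℝ (deriv g) := hg.differentiable_deriv_two
  have hDG : ∀ z ≠ 0, HasFDerivAt G (gaugeFDeriv g z) z := fun z hz => by
    refine (hasFDerivAt_gauge (hgd _) hz).congr_of_eventuallyEq ?_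
    filter_upwards [eventually_ne_nhds hz] with w hw
    rw [hGdef w hw, Complex.real_smul, Complex.ofReal_div]
    ring
  have hD2G : ∀ z ≠ 0, ∃ B : ℂ →L[ℝ] ℂ →L[ℝ] ℂ, HasFDerivAt (fderiv ℝ G) B z ∧
      ‖B‖ ≤ |deriv (deriv g) ‖z‖| + 6 * (|deriv g ‖z‖| / ‖z‖) + 6 * (|g ‖z‖| / ‖z‖ ^ 2) :=
    fun z hz => by
      obtain ⟨B, hB, hBle⟩ := exists_hasFDerivAt_gaugeFDeriv_le (hgd _) (hg'd _) hz
      refine ⟨B, hB.congr_of_eventuallyEq ?_, hBle⟩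
      filter_upwards [eventually_ne_nhds hz] with w hw
      exact (hDG w hw).fderiv
  refine ⟨fun z hz => ⟨(hDG z hz).differentiableAt, (hD2G z hz).choose_spec.1.differentiableAt⟩,
    13 * C₀, by positivity, fun z hz => ?_⟩
  obtain ⟨B, hB, hBle⟩ := hD2G z hz
  set r := ‖z‖
  have hr : 0 < r := norm_pos_iff.mpr hz
  set M := C₀ * (r ^ α₁ + r ^ α₂)
  have hM : ∀ x ∈ Icc 0 r, |deriv (deriv g) x| ≤ M := fun x hx => by
    refine (hg'' x).trans ?_
    rw [abs_of_nonneg hx.1]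
    exact mul_le_mul_of_nonneg_left (add_le_add (Real.rpow_le_rpow hx.1 hx.2 (by linarith))
      (Real.rpow_le_rpow hx.1 hx.2 (by linarith))) hC₀.le
  obtain ⟨h1, h0⟩ := abs_le_of_abs_deriv_deriv_le hgd hg'd hg0 hg'0 hr.le hM
  have h1' : |deriv g r| / r ≤ M := (div_le_iff₀ hr).mpr h1
  have h0' : |g r| / r ^ 2 ≤ M := (div_le_iff₀ (by positivity)).mpr h0
  rw [hB.fderiv]
  linarith [hM r ⟨hr.le, le_rfl⟩]

/-- The gauge-equivariant extension `G` of `g` is twice real-Fréchet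
differentiable at every `z ≠ 0`, and there is `C₁ > 0` with
`‖D²G(z)‖ ≤ C₁(|z|^α₁ + |z|^α₂)` for all `z ≠ 0`. -/
theorem stmt_1 (α₁ α₂ C₀ : ℝ) (hα₁ : 1/2 < α₁) (hα : α₁ ≤ α₂) (hC₀ : 0 < C₀)
    (g : ℝ → ℝ) (hg : ContDiff ℝ 2 g) (hodd : ∀ s : ℝ, g (-s) = -g s)
    (hg0 : g 0 = 0) (hg'0 : deriv g 0 = 0)
    (hg'' : ∀ s : ℝ, |deriv (deriv g) s| ≤ C₀ * (|s| ^ α₁ + |s| ^ α₂))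
    (G : ℂ → ℂ) (hG0 : G 0 = 0)
    (hGdef : ∀ z : ℂ, z ≠ 0 → G z = (z / (‖z‖ : ℂ)) * (g (‖z‖) : ℂ)) :
    (∀ z : ℂ, z ≠ 0 → DifferentiableAt ℝ G z ∧ DifferentiableAt ℝ (fderiv ℝ G) z) ∧
    ∃ C₁ > 0, ∀ z : ℂ, z ≠ 0 →
      ‖fderiv ℝ (fderiv ℝ G) z‖ ≤ C₁ * (‖z‖ ^ α₁ + ‖z‖ ^ α₂) :=
  stmt_1_general α₁ α₂ C₀ hα₁ hα hC₀ g hg hg0 hg'0 hg'' G hGdef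
end

section
/- There exists a constant C > 0 (depending only on C₀, α₁, α₂) such that for every a ∈ ℂ with a ≠ 0 and every w ∈ ℂ, the real Fréchet derivative of G satisfies |DG(a)[w]| ≤ C(|a|^{1+α₁} + |a|^{1+α₂})·|w|. -/
/-!
Away from the origin `G z = φ ‖z‖ • z` with `φ t = g t / t`, so
`DG(a) w = φ ‖a‖ • w + φ' ‖a‖ ⟪a, w⟫ / ‖a‖ • a` and `‖DG(a)‖ ≤ |φ r| + r |φ' r|` for `r = ‖a‖`.
Since `g 0 = g' 0 = 0`, two applications of the mean value theorem give `|g' r| ≤ M r` and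
`|g r| ≤ M r²` with `M = C₀ (r^α₁ + r^α₂)` bounding `|g''|` on `[-r, r]`; hence
`|φ r| + r |φ' r| ≤ 3 M r = 3 C₀ (r^(1+α₁) + r^(1+α₂))`.
-/

open Real Metric Topology

theorem abs_le_mul_abs_of_abs_deriv_le {f : ℝ → ℝ} (hf : Differentiable ℝ f) (hf0 : f 0 = 0)
    {r M : ℝ} (hM : ∀ x, |x| ≤ r → |deriv f x| ≤ M) {s : ℝ} (hs : |s| ≤ r) :
    |f s| ≤ M * |s| := by
  simpa [hf0] using (convex_closedBall (0 : ℝ) r).norm_image_sub_le_of_norm_deriv_le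
    (fun x _ => hf x) (fun x hx => hM x (mem_closedBall_zero_iff.1 hx))
    (mem_closedBall_self ((abs_nonneg s).trans hs)) (mem_closedBall_zero_iff.2 hs)

theorem abs_deriv_le_and_abs_le_of_abs_deriv_deriv_le {g : ℝ → ℝ} (hg : ContDiff ℝ 2 g)
    (hg0 : g 0 = 0) (hg'0 : deriv g 0 = 0) {r M : ℝ} (hr : 0 ≤ r)
    (hM : ∀ x, |x| ≤ r → |deriv (deriv g) x| ≤ M) :
    |deriv g r| ≤ M * r ∧ |g r| ≤ M * r * r := by
  have hg' : Differentiable ℝ (deriv g) :=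
    (hg.iterate_deriv' 1 1).differentiable one_ne_zero
  have hderiv : ∀ x, |x| ≤ r → |deriv g x| ≤ M * r := fun x hx =>
    (abs_le_mul_abs_of_abs_deriv_le hg' hg'0 hM hx).trans <|
      mul_le_mul_of_nonneg_left hx ((abs_nonneg _).trans (hM 0 (by simpa using hr)))
  have hr' : |r| ≤ r := (abs_of_nonneg hr).le
  refine ⟨hderiv r hr', ?_⟩
  simpa [abs_of_nonneg hr] using
    abs_le_mul_abs_of_abs_deriv_le (hg.differentiable two_ne_zero) hg0 hderiv hr'

section Radial

variable {E : Type*} [NormedAddCommGroup E] [InnerProductSpace ℝ E]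

theorem hasFDerivAt_smul_self_comp_norm {φ : ℝ → ℝ} {φ' : ℝ} {a : E} (ha : a ≠ 0)
    (hφ : HasDerivAt φ φ' ‖a‖) :
    HasFDerivAt (fun z : E => φ ‖z‖ • z)
      (φ ‖a‖ • ContinuousLinearMap.id ℝ E + (φ' • fderiv ℝ (fun z : E => ‖z‖) a).smulRight a)
      a := by
  have hN : HasFDerivAt (fun z : E => ‖z‖) (fderiv ℝ (fun z : E => ‖z‖) a) a :=
    ((contDiffAt_norm ℝ ha).differentiableAt one_ne_zero).hasFDerivAt
  exact (hφ.comp_hasFDerivAt a hN).smul (hasFDerivAt_id a)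

theorem norm_fderiv_smul_self_comp_norm_apply_le {φ : ℝ → ℝ} {φ' : ℝ} {a : E} (ha : a ≠ 0)
    (hφ : HasDerivAt φ φ' ‖a‖) (w : E) :
    ‖fderiv ℝ (fun z : E => φ ‖z‖ • z) a w‖ ≤ (|φ ‖a‖| + |φ'| * ‖a‖) * ‖w‖ := by
  set N := fderiv ℝ (fun z : E => ‖z‖) a
  have hN : ‖N w‖ ≤ ‖w‖ :=
    (N.le_opNorm w).trans <| mul_le_of_le_one_left (norm_nonneg w)
      (by simpa using norm_fderiv_le_of_lipschitz ℝ (x₀ := a) (lipschitzWith_one_norm (E := E)))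
  rw [(hasFDerivAt_smul_self_comp_norm ha hφ).fderiv]
  calc ‖φ ‖a‖ • w + (φ' * N w) • a‖
      ≤ |φ ‖a‖| * ‖w‖ + |φ'| * ‖N w‖ * ‖a‖ := by
        simpa [norm_smul, abs_mul] using norm_add_le (φ ‖a‖ • w) ((φ' * N w) • a)
    _ ≤ |φ ‖a‖| * ‖w‖ + |φ'| * ‖w‖ * ‖a‖ := by gcongr
    _ = (|φ ‖a‖| + |φ'| * ‖a‖) * ‖w‖ := by ring

end Radial

theorem abs_div_add_abs_quotient_rule_mul_le {r K u v : ℝ} (hr : 0 < r) (hu : |u| ≤ K)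
    (hv : |v| ≤ K * r) : |v / r| + |(u * r - v * 1) / r ^ 2| * r ≤ 3 * K := by
  have hv' : |v| / r ≤ K := (div_le_iff₀ hr).2 hv
  have hnum : |u * r - v * 1| ≤ 2 * K * r := by
    calc |u * r - v * 1| ≤ |u| * r + |v| := by
          simpa [abs_mul, abs_of_pos hr] using abs_sub (u * r) (v * 1)
      _ ≤ K * r + K * r := by gcongr
      _ = 2 * K * r := by ring
  calc |v / r| + |(u * r - v * 1) / r ^ 2| * r
      = |v| / r + |u * r - v * 1| / r := by
        rw [abs_div, abs_div, abs_of_pos hr, abs_of_pos (by positivity : 0 < r ^ 2)]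
        field_simp
    _ ≤ K + 2 * K := add_le_add hv' ((div_le_iff₀ hr).2 hnum)
    _ = 3 * K := by ring

theorem stmt_4_general (α₁ α₂ C₀ : ℝ) (hα₁ : 1/2 < α₁) (hα : α₁ ≤ α₂) (hC₀ : 0 < C₀)
    (g : ℝ → ℝ) (hg : ContDiff ℝ 2 g)
    (hg0 : g 0 = 0) (hg'0 : deriv g 0 = 0)
    (hg'' : ∀ s : ℝ, |deriv (deriv g) s| ≤ C₀ * (|s| ^ α₁ + |s| ^ α₂))
    (G : ℂ → ℂ)
    (hGdef : ∀ z : ℂ, z ≠ 0 → G z = (z / ((‖z‖ : ℝ) : ℂ)) * (g ‖z‖ : ℂ)) :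
    ∃ C > 0, ∀ a : ℂ, a ≠ 0 →
      DifferentiableAt ℝ G a ∧
      ∀ w : ℂ, ‖fderiv ℝ G a w‖
        ≤ C * (‖a‖ ^ (1 + α₁) + ‖a‖ ^ (1 + α₂)) * ‖w‖ := by
  refine ⟨3 * C₀, by positivity, fun a ha => ?_⟩
  have hr : 0 < ‖a‖ := norm_pos_iff.2 ha
  have hα₁0 : 0 ≤ α₁ := by linarith
  have hα₂0 : 0 ≤ α₂ := hα₁0.trans hα
  have hM : ∀ x, |x| ≤ ‖a‖ → |deriv (deriv g) x| ≤ C₀ * (‖a‖ ^ α₁ + ‖a‖ ^ α₂) := fun x hx =>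
    (hg'' x).trans <| by gcongr
  obtain ⟨hg'a, hga⟩ := abs_deriv_le_and_abs_le_of_abs_deriv_deriv_le hg hg0 hg'0 hr.le hM
  have hφ : HasDerivAt (fun t => g t / t) ((deriv g ‖a‖ * ‖a‖ - g ‖a‖ * 1) / ‖a‖ ^ 2) ‖a‖ :=
    ((hg.differentiable two_ne_zero _).hasDerivAt).div (hasDerivAt_id _) hr.ne'
  have hGeq : G =ᶠ[𝓝 a] fun z => (g ‖z‖ / ‖z‖) • z := by
    filter_upwards [isOpen_ne.mem_nhds ha] with z hz
    rw [hGdef z hz, Complex.real_smul]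
    push_cast
    ring
  refine ⟨(hasFDerivAt_smul_self_comp_norm ha hφ).congr_of_eventuallyEq hGeq |>.differentiableAt,
    fun w => ?_⟩
  rw [hGeq.fderiv_eq]
  refine (norm_fderiv_smul_self_comp_norm_apply_le ha hφ w).trans ?_
  calc _ ≤ 3 * (C₀ * (‖a‖ ^ α₁ + ‖a‖ ^ α₂) * ‖a‖) * ‖w‖ := by
        gcongr; exact abs_div_add_abs_quotient_rule_mul_le hr hg'a hga
    _ = 3 * C₀ * (‖a‖ ^ (1 + α₁) + ‖a‖ ^ (1 + α₂)) * ‖w‖ := by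
        rw [rpow_add hr, rpow_add hr, rpow_one]; ring

/-- There is `C > 0` such that for every `a ≠ 0` (where `G` is real-Fréchet
differentiable) and every `w`, `|DG(a)[w]| ≤ C(|a|^(1+α₁) + |a|^(1+α₂))·|w|`. -/
theorem stmt_4 (α₁ α₂ C₀ : ℝ) (hα₁ : 1/2 < α₁) (hα : α₁ ≤ α₂) (hC₀ : 0 < C₀)
    (g : ℝ → ℝ) (hg : ContDiff ℝ 2 g) (hodd : ∀ s : ℝ, g (-s) = -g s)
    (hg0 : g 0 = 0) (hg'0 : deriv g 0 = 0)
    (hg'' : ∀ s : ℝ, |deriv (deriv g) s| ≤ C₀ * (|s| ^ α₁ + |s| ^ α₂))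
    (G : ℂ → ℂ) (hG0 : G 0 = 0)
    (hGdef : ∀ z : ℂ, z ≠ 0 → G z = (z / ((‖z‖ : ℝ) : ℂ)) * (g ‖z‖ : ℂ)) :
    ∃ C > 0, ∀ a : ℂ, a ≠ 0 →
      DifferentiableAt ℝ G a ∧
      ∀ w : ℂ, ‖fderiv ℝ G a w‖
        ≤ C * (‖a‖ ^ (1 + α₁) + ‖a‖ ^ (1 + α₂)) * ‖w‖ :=
  stmt_4_general α₁ α₂ C₀ hα₁ hα hC₀ g hg hg0 hg'0 hg'' G hGdef
end

section
/- Define g₂(a, z) = G(a + z) − G(a) − DG(a)[z] for a, z ∈ ℂ. Then there exists a constant C > 0 (depending only on C₀, α₁, α₂) such that for all a, z ∈ ℂ: |g₂(a, z)| ≤ C(|a|^{α₁} + |a|^{α₂} + |z|^{α₁} + |z|^{α₂})·|z|². -/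
/-!
Write `G w = γ(‖w‖) • w` with `γ(r) = g(r)/r`. From `|g''| ≤ M` with `M` nondecreasing and
`g(0) = g'(0) = 0` one gets `|γ| ≤ M r`, `|γ'| ≤ 2M`, `|γ''| ≤ 5M/r`, hence along a segment
`t ↦ a + t z` that stays at distance `≥ ‖a‖/2` from the origin the second derivative of
`t ↦ G(a + t z)` is `O(M(‖a‖ + ‖z‖) ‖z‖²)`, and Taylor's formula bounds the remainder. This
happens when `2‖z‖ < ‖a‖`; otherwise `‖a‖ ≤ 2‖z‖`, and the three terms `G(a+z)`, `G(a)` and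
`DG(a)z` are each `O(M(‖a‖ + ‖z‖) ‖z‖²)` on their own.
-/

open Set Filter Topology Asymptotics
open scoped RealInnerProductSpace

theorem norm_sub_sub_deriv_le_of_norm_deriv2_le {E : Type*} [NormedAddCommGroup E]
    [NormedSpace ℝ E] {f f' f'' : ℝ → E} {K : ℝ}
    (hf : ∀ t ∈ Icc (0 : ℝ) 1, HasDerivAt f (f' t) t)
    (hf' : ∀ t ∈ Icc (0 : ℝ) 1, HasDerivAt f' (f'' t) t)
    (hK : ∀ t ∈ Icc (0 : ℝ) 1, ‖f'' t‖ ≤ K) :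
    ‖f 1 - f 0 - f' 0‖ ≤ K := by
  have hK0 : 0 ≤ K := (norm_nonneg _).trans (hK 0 (left_mem_Icc.2 zero_le_one))
  have hf'_sub : ∀ t ∈ Icc (0 : ℝ) 1, ‖f' t - f' 0‖ ≤ K * (t - 0) :=
    norm_image_sub_le_of_norm_deriv_le_segment' (fun t ht => (hf' t ht).hasDerivWithinAt)
      fun t ht => hK t (Ico_subset_Icc_self ht)
  have key := norm_image_sub_le_of_norm_deriv_le_segment_01'
    (f := fun t => f t - t • f' 0) (f' := fun t => f' t - f' 0)
    (fun t ht => ((hf t ht).sub (by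
      simpa using (hasDerivAt_id t).smul_const (f' 0))).hasDerivWithinAt)
    fun t ht => (hf'_sub t (Ico_subset_Icc_self ht)).trans
      (by nlinarith [ht.1, ht.2])
  rwa [one_smul, zero_smul, sub_zero, sub_right_comm] at key

theorem abs_le_mul_of_abs_deriv_le_s6 {f f' : ℝ → ℝ} {B r : ℝ} (hr : 0 ≤ r) (hf0 : f 0 = 0)
    (hf : ∀ s ∈ Icc 0 r, HasDerivAt f (f' s) s) (hB : ∀ s ∈ Icc 0 r, |f' s| ≤ B) :
    |f r| ≤ B * r := by
  simpa [hf0] using norm_image_sub_le_of_norm_deriv_le_segment'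
    (fun s hs => (hf s hs).hasDerivWithinAt) (fun s hs => hB s (Ico_subset_Icc_self hs))
    r (right_mem_Icc.2 hr)

theorem add_rpow_le_two_rpow_mul_rpow_add_rpow {x y p : ℝ} (hx : 0 ≤ x) (hy : 0 ≤ y)
    (hp : 0 ≤ p) : (x + y) ^ p ≤ 2 ^ p * (x ^ p + y ^ p) :=
  calc (x + y) ^ p ≤ (2 * max x y) ^ p := by
        gcongr
        rw [two_mul]
        exact add_le_add (le_max_left x y) (le_max_right x y)
    _ = 2 ^ p * max x y ^ p := Real.mul_rpow zero_le_two (le_max_of_le_left hx)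
    _ ≤ 2 ^ p * (x ^ p + y ^ p) := by
        gcongr
        rcases le_total x y with hxy | hxy
        · rw [max_eq_right hxy]
          linarith [Real.rpow_nonneg hx p]
        · rw [max_eq_left hxy]
          linarith [Real.rpow_nonneg hy p]

namespace GaugeExt

variable {g M : ℝ → ℝ} {r : ℝ}

/-- The hypotheses on `g`, with the majorant `C₀ (r ^ α₁ + r ^ α₂)` of `|g''|` replaced by an
arbitrary nondecreasing `M`. -/
structure ProfileBound (g M : ℝ → ℝ) : Prop where
  contDiff : ContDiff ℝ 2 g
  map_zero : g 0 = 0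
  deriv_zero : deriv g 0 = 0
  monotoneOn : MonotoneOn M (Ici 0)
  abs_deriv2_le : ∀ r, 0 ≤ r → |deriv (deriv g) r| ≤ M r

noncomputable def ratio (g : ℝ → ℝ) (r : ℝ) : ℝ := g r / r

noncomputable def ratioDeriv (g : ℝ → ℝ) (r : ℝ) : ℝ := (deriv g r * r - g r) / r ^ 2

noncomputable def ratioDeriv2 (g : ℝ → ℝ) (r : ℝ) : ℝ :=
  deriv (deriv g) r / r - 2 * (deriv g r * r - g r) / r ^ 3

theorem hasDerivAt_ratio (hg : DifferentiableAt ℝ g r) (hr : r ≠ 0) :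
    HasDerivAt (ratio g) (ratioDeriv g r) r :=
  (hg.hasDerivAt.div (hasDerivAt_id' r) hr).congr_deriv (by rw [ratioDeriv, mul_one])

theorem hasDerivAt_ratioDeriv (hg : DifferentiableAt ℝ g r)
    (hg' : DifferentiableAt ℝ (deriv g) r) (hr : r ≠ 0) :
    HasDerivAt (ratioDeriv g) (ratioDeriv2 g r) r := by
  have hnum := (hg'.hasDerivAt.mul (hasDerivAt_id' r)).sub hg.hasDerivAt
  refine (hnum.div ((hasDerivAt_id' r).pow 2) (pow_ne_zero 2 hr)).congr_deriv ?_
  simp only [ratioDeriv2, Pi.pow_apply, Pi.sub_apply, Pi.mul_apply]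
  field_simp
  ring

namespace ProfileBound

theorem nonneg (h : ProfileBound g M) (hr : 0 ≤ r) : 0 ≤ M r :=
  (abs_nonneg _).trans (h.abs_deriv2_le r hr)

theorem abs_deriv_le (h : ProfileBound g M) (hr : 0 ≤ r) : |deriv g r| ≤ M r * r :=
  abs_le_mul_of_abs_deriv_le_s6 hr h.deriv_zero
    (fun s _ => (h.contDiff.differentiable_deriv_two s).hasDerivAt)
    fun s hs => (h.abs_deriv2_le s hs.1).trans (h.monotoneOn hs.1 hr hs.2)

theorem abs_le (h : ProfileBound g M) (hr : 0 ≤ r) : |g r| ≤ M r * r ^ 2 := by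
  rw [sq, ← mul_assoc]
  refine abs_le_mul_of_abs_deriv_le_s6 hr h.map_zero
    (fun s _ => (h.contDiff.differentiable two_ne_zero s).hasDerivAt) fun s hs => ?_
  calc |deriv g s| ≤ M s * s := h.abs_deriv_le hs.1
    _ ≤ M r * r := mul_le_mul (h.monotoneOn hs.1 hr hs.2) hs.2 hs.1 (h.nonneg hr)

theorem abs_ratio_le (h : ProfileBound g M) (hr : 0 ≤ r) : |ratio g r| ≤ M r * r := by
  rcases hr.eq_or_lt with rfl | hr
  · simp [ratio]
  rw [ratio, abs_div, abs_of_pos hr, div_le_iff₀ hr]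
  simpa [sq, mul_assoc] using h.abs_le hr.le

theorem abs_deriv_mul_sub_le (h : ProfileBound g M) (hr : 0 ≤ r) :
    |deriv g r * r - g r| ≤ 2 * M r * r ^ 2 := by
  calc |deriv g r * r - g r| ≤ |deriv g r| * r + |g r| := by
        simpa [abs_mul, abs_of_nonneg hr] using abs_sub (deriv g r * r) (g r)
    _ ≤ M r * r * r + M r * r ^ 2 :=
        add_le_add (mul_le_mul_of_nonneg_right (h.abs_deriv_le hr) hr) (h.abs_le hr)
    _ = 2 * M r * r ^ 2 := by ring

theorem abs_ratioDeriv_le (h : ProfileBound g M) (hr : 0 < r) :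
    |ratioDeriv g r| ≤ 2 * M r := by
  rw [ratioDeriv, abs_div, abs_of_pos (pow_pos hr 2), div_le_iff₀ (pow_pos hr 2)]
  exact h.abs_deriv_mul_sub_le hr.le

theorem abs_ratioDeriv2_mul_le (h : ProfileBound g M) (hr : 0 < r) :
    |ratioDeriv2 g r| * r ≤ 5 * M r := by
  have h1 : |deriv (deriv g) r / r| * r ≤ M r := by
    rw [abs_div, abs_of_pos hr, div_mul_cancel₀ _ hr.ne']
    exact h.abs_deriv2_le r hr.le
  have h2 : |2 * (deriv g r * r - g r) / r ^ 3| * r ≤ 4 * M r := by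
    rw [abs_div, abs_mul, abs_two, abs_of_pos (pow_pos hr 3), div_mul_eq_mul_div,
      div_le_iff₀ (pow_pos hr 3)]
    nlinarith [h.abs_deriv_mul_sub_le hr.le]
  calc |ratioDeriv2 g r| * r
      ≤ (|deriv (deriv g) r / r| + |2 * (deriv g r * r - g r) / r ^ 3|) * r :=
        mul_le_mul_of_nonneg_right (abs_sub _ _) hr.le
    _ ≤ 5 * M r := by linarith

end ProfileBound

variable {E : Type*} [NormedAddCommGroup E] [InnerProductSpace ℝ E] {a z : E} {t : ℝ}

noncomputable def radialSpeed (a z : E) (t : ℝ) : ℝ := ⟪a + t • z, z⟫ / ‖a + t • z‖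

noncomputable def radialAccel (a z : E) (t : ℝ) : ℝ :=
  (‖z‖ ^ 2 - radialSpeed a z t ^ 2) / ‖a + t • z‖

theorem hasDerivAt_line (a z : E) (t : ℝ) : HasDerivAt (fun s : ℝ => a + s • z) z t := by
  simpa using ((hasDerivAt_id t).smul_const z).const_add a

theorem hasDerivAt_norm_line (ht : a + t • z ≠ 0) :
    HasDerivAt (fun s : ℝ => ‖a + s • z‖) (radialSpeed a z t) t := by
  have h := (hasDerivAt_line a z t).norm_sq.sqrt (by positivity)
  simp only [Real.sqrt_sq (norm_nonneg _)] at h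
  refine h.congr_deriv ?_
  rw [radialSpeed]
  ring

theorem hasDerivAt_radialSpeed (ht : a + t • z ≠ 0) :
    HasDerivAt (radialSpeed a z) (radialAccel a z t) t := by
  have hinner : HasDerivAt (fun s : ℝ => ⟪a + s • z, z⟫) (‖z‖ ^ 2) t := by
    simpa [real_inner_self_eq_norm_sq] using
      (hasDerivAt_line a z t).inner ℝ (hasDerivAt_const t z)
  have hρ : ‖a + t • z‖ ≠ 0 := norm_ne_zero_iff.2 ht
  refine (hinner.div (hasDerivAt_norm_line ht) hρ).congr_deriv ?_
  rw [radialAccel, radialSpeed]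
  field_simp

theorem abs_radialSpeed_le (a z : E) (t : ℝ) : |radialSpeed a z t| ≤ ‖z‖ := by
  rw [radialSpeed, abs_div, abs_norm]
  exact div_le_of_le_mul₀ (norm_nonneg _) (norm_nonneg _)
    ((abs_real_inner_le_norm _ _).trans_eq (mul_comm _ _))

theorem abs_radialAccel_mul_norm_le (a z : E) (t : ℝ) :
    |radialAccel a z t| * ‖a + t • z‖ ≤ ‖z‖ ^ 2 := by
  rcases eq_or_ne ‖a + t • z‖ 0 with h0 | h0
  · simp [h0]
  have hspeed : radialSpeed a z t ^ 2 ≤ ‖z‖ ^ 2 := by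
    simpa using sq_le_sq.2 (abs_radialSpeed_le a z t |>.trans_eq (abs_norm z).symm)
  rw [radialAccel, abs_div, abs_norm, div_mul_cancel₀ _ h0,
    abs_of_nonneg (sub_nonneg.2 hspeed)]
  linarith [sq_nonneg (radialSpeed a z t)]

/-- `ratio g 0 = g 0 / 0 = 0`, so `radialExt g 0 = 0`. -/
noncomputable def radialExt (g : ℝ → ℝ) (w : E) : E := ratio g ‖w‖ • w

noncomputable def radialExtLineDeriv (g : ℝ → ℝ) (a z : E) (t : ℝ) : E :=
  ratio g ‖a + t • z‖ • z + (ratioDeriv g ‖a + t • z‖ * radialSpeed a z t) • (a + t • z)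

noncomputable def radialExtLineDeriv2 (g : ℝ → ℝ) (a z : E) (t : ℝ) : E :=
  (2 * (ratioDeriv g ‖a + t • z‖ * radialSpeed a z t)) • z
    + (ratioDeriv2 g ‖a + t • z‖ * radialSpeed a z t ^ 2
      + ratioDeriv g ‖a + t • z‖ * radialAccel a z t) • (a + t • z)

theorem hasDerivAt_radialExt_line (hg : Differentiable ℝ g) (ht : a + t • z ≠ 0) :
    HasDerivAt (fun s : ℝ => radialExt g (a + s • z)) (radialExtLineDeriv g a z t) t := by
  have hratio := (hasDerivAt_ratio (hg _) (norm_ne_zero_iff.2 ht)).comp t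
    (hasDerivAt_norm_line ht)
  exact hratio.smul (hasDerivAt_line a z t)

theorem hasDerivAt_radialExtLineDeriv (hg : ContDiff ℝ 2 g) (ht : a + t • z ≠ 0) :
    HasDerivAt (radialExtLineDeriv g a z) (radialExtLineDeriv2 g a z t) t := by
  have hρ : ‖a + t • z‖ ≠ 0 := norm_ne_zero_iff.2 ht
  have hratio := (hasDerivAt_ratio (hg.differentiable two_ne_zero _) hρ).comp t
    (hasDerivAt_norm_line ht)
  have hratioDeriv := (hasDerivAt_ratioDeriv (hg.differentiable two_ne_zero _)
    (hg.differentiable_deriv_two _) hρ).comp t (hasDerivAt_norm_line ht)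
  refine ((hratio.smul_const z).add ((hratioDeriv.mul (hasDerivAt_radialSpeed ht)).smul
    (hasDerivAt_line a z t))).congr_deriv ?_
  simp only [radialExtLineDeriv2, Function.comp_apply, Pi.mul_apply]
  module

theorem norm_radialExtLineDeriv2_le (h : ProfileBound g M) (ht : a + t • z ≠ 0) :
    ‖radialExtLineDeriv2 g a z t‖ ≤ 11 * M ‖a + t • z‖ * ‖z‖ ^ 2 := by
  set ρ := ‖a + t • z‖ with hρ_def
  have hρ : 0 < ρ := norm_pos_iff.2 ht
  have hM : 0 ≤ M ρ := h.nonneg hρ.le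
  have hD := h.abs_ratioDeriv_le hρ
  have hD2 := h.abs_ratioDeriv2_mul_le hρ
  have hS := abs_radialSpeed_le a z t
  have hA := abs_radialAccel_mul_norm_le a z t
  have hS2 : radialSpeed a z t ^ 2 ≤ ‖z‖ ^ 2 := by
    simpa using sq_le_sq.2 (hS.trans_eq (abs_norm z).symm)
  have h1 : ‖(2 * (ratioDeriv g ρ * radialSpeed a z t)) • z‖ ≤ 4 * M ρ * ‖z‖ ^ 2 := by
    rw [norm_smul, Real.norm_eq_abs, abs_mul, abs_mul, abs_two]
    calc 2 * (|ratioDeriv g ρ| * |radialSpeed a z t|) * ‖z‖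
        ≤ 2 * (2 * M ρ * ‖z‖) * ‖z‖ := by gcongr
      _ = 4 * M ρ * ‖z‖ ^ 2 := by ring
  have h2 : ‖(ratioDeriv2 g ρ * radialSpeed a z t ^ 2 + ratioDeriv g ρ * radialAccel a z t)
      • (a + t • z)‖ ≤ 7 * M ρ * ‖z‖ ^ 2 := by
    rw [norm_smul, Real.norm_eq_abs, ← hρ_def]
    calc |ratioDeriv2 g ρ * radialSpeed a z t ^ 2 + ratioDeriv g ρ * radialAccel a z t| * ρ
        ≤ (|ratioDeriv2 g ρ| * ρ) * radialSpeed a z t ^ 2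
          + |ratioDeriv g ρ| * (|radialAccel a z t| * ρ) := by
          have := abs_add_le (ratioDeriv2 g ρ * radialSpeed a z t ^ 2)
            (ratioDeriv g ρ * radialAccel a z t)
          rw [abs_mul, abs_mul, abs_sq] at this
          nlinarith
      _ ≤ 5 * M ρ * ‖z‖ ^ 2 + 2 * M ρ * ‖z‖ ^ 2 := by gcongr
      _ = 7 * M ρ * ‖z‖ ^ 2 := by ring
  calc ‖radialExtLineDeriv2 g a z t‖ ≤ 4 * M ρ * ‖z‖ ^ 2 + 7 * M ρ * ‖z‖ ^ 2 :=
        (norm_add_le _ _).trans (add_le_add h1 h2)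
    _ = 11 * M ρ * ‖z‖ ^ 2 := by ring

theorem norm_radialExt_le (h : ProfileBound g M) (w : E) :
    ‖radialExt g w‖ ≤ M ‖w‖ * ‖w‖ ^ 2 := by
  rw [radialExt, norm_smul, Real.norm_eq_abs]
  calc |ratio g ‖w‖| * ‖w‖ ≤ M ‖w‖ * ‖w‖ * ‖w‖ :=
        mul_le_mul_of_nonneg_right (h.abs_ratio_le (norm_nonneg w)) (norm_nonneg w)
    _ = M ‖w‖ * ‖w‖ ^ 2 := by ring

theorem hasFDerivAt_radialExt_zero (h : ProfileBound g M) :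
    HasFDerivAt (radialExt g) (0 : E →L[ℝ] E) 0 := by
  have hbig : radialExt g =O[𝓝 0] fun w : E => ‖w‖ ^ 2 := by
    refine IsBigO.of_bound (M 1) ?_
    filter_upwards [Metric.closedBall_mem_nhds (0 : E) one_pos] with w hw
    rw [mem_closedBall_zero_iff] at hw
    rw [Real.norm_of_nonneg (by positivity)]
    exact (norm_radialExt_le h w).trans (mul_le_mul_of_nonneg_right
      (h.monotoneOn (norm_nonneg w) (mem_Ici.2 zero_le_one) hw) (by positivity))
  rw [hasFDerivAt_iff_isLittleO_nhds_zero]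
  refine (hbig.trans_isLittleO (isLittleO_norm_pow_id one_lt_two)).congr_left fun w => ?_
  simp [radialExt]

theorem differentiableAt_radialExt {w : E} (hg : DifferentiableAt ℝ g ‖w‖) (hw : w ≠ 0) :
    DifferentiableAt ℝ (radialExt g) w :=
  ((hasDerivAt_ratio hg (norm_ne_zero_iff.2 hw)).differentiableAt.comp w
    (differentiableAt_id.norm ℝ hw)).smul differentiableAt_id

theorem fderiv_radialExt_apply (hg : Differentiable ℝ g) (ha : a ≠ 0) :
    fderiv ℝ (radialExt g) a z = radialExtLineDeriv g a z 0 := by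
  have hchain := (differentiableAt_radialExt (hg _) ha).hasFDerivAt.comp_hasDerivAt_of_eq 0
    (hasDerivAt_line a z 0) (by simp)
  exact hchain.unique (hasDerivAt_radialExt_line hg (by simpa using ha))

theorem norm_fderiv_radialExt_apply_le (h : ProfileBound g M) (a z : E) :
    ‖fderiv ℝ (radialExt g) a z‖ ≤ 3 * M ‖a‖ * ‖a‖ * ‖z‖ := by
  rcases eq_or_ne a 0 with rfl | ha
  · simp [(hasFDerivAt_radialExt_zero h).fderiv]
  have hr : 0 < ‖a‖ := norm_pos_iff.2 ha
  rw [fderiv_radialExt_apply (h.contDiff.differentiable two_ne_zero) ha, radialExtLineDeriv]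
  simp only [zero_smul, add_zero]
  refine (norm_add_le _ _).trans ?_
  rw [norm_smul, norm_smul, Real.norm_eq_abs, Real.norm_eq_abs, abs_mul]
  have hratio := h.abs_ratio_le hr.le
  have hD := h.abs_ratioDeriv_le hr
  have hS := abs_radialSpeed_le a z 0
  have hM := h.nonneg hr.le
  calc |ratio g ‖a‖| * ‖z‖ + |ratioDeriv g ‖a‖| * |radialSpeed a z 0| * ‖a‖
      ≤ M ‖a‖ * ‖a‖ * ‖z‖ + 2 * M ‖a‖ * ‖z‖ * ‖a‖ := by gcongr
    _ = 3 * M ‖a‖ * ‖a‖ * ‖z‖ := by ring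

theorem norm_radialExt_remainder_le_of_two_mul_norm_lt (h : ProfileBound g M)
    (haz : 2 * ‖z‖ < ‖a‖) :
    ‖radialExt g (a + z) - radialExt g a - fderiv ℝ (radialExt g) a z‖
      ≤ 11 * M (‖a‖ + ‖z‖) * ‖z‖ ^ 2 := by
  have hseg : ∀ t ∈ Icc (0 : ℝ) 1, 0 < ‖a + t • z‖ ∧ ‖a + t • z‖ ≤ ‖a‖ + ‖z‖ := by
    intro t ht
    have htz : ‖t • z‖ ≤ ‖z‖ := by
      rw [norm_smul, Real.norm_of_nonneg ht.1]
      exact mul_le_of_le_one_left (norm_nonneg z) ht.2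
    have hlow := norm_sub_le (a + t • z) (t • z)
    rw [add_sub_cancel_right] at hlow
    exact ⟨by linarith [norm_nonneg z], (norm_add_le _ _).trans (by linarith)⟩
  have hne : ∀ t ∈ Icc (0 : ℝ) 1, a + t • z ≠ 0 := fun t ht => norm_pos_iff.1 (hseg t ht).1
  have hg := h.contDiff.differentiable two_ne_zero
  have key := norm_sub_sub_deriv_le_of_norm_deriv2_le
    (f := fun t => radialExt g (a + t • z)) (K := 11 * M (‖a‖ + ‖z‖) * ‖z‖ ^ 2)
    (fun t ht => hasDerivAt_radialExt_line hg (hne t ht))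
    (fun t ht => hasDerivAt_radialExtLineDeriv h.contDiff (hne t ht))
    fun t ht => (norm_radialExtLineDeriv2_le h (hne t ht)).trans (by
      gcongr
      exact h.monotoneOn (hseg t ht).1.le (mem_Ici.2 (by positivity)) (hseg t ht).2)
  rw [← fderiv_radialExt_apply hg (by simpa using hne 0 (left_mem_Icc.2 zero_le_one))] at key
  simpa using key

theorem norm_radialExt_remainder_le_of_norm_le_two_mul (h : ProfileBound g M)
    (haz : ‖a‖ ≤ 2 * ‖z‖) :
    ‖radialExt g (a + z) - radialExt g a - fderiv ℝ (radialExt g) a z‖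
      ≤ 19 * M (‖a‖ + ‖z‖) * ‖z‖ ^ 2 := by
  set R := ‖a‖ + ‖z‖
  have hR : 0 ≤ R := by positivity
  have hMR := h.nonneg hR
  have hMa : M ‖a‖ ≤ M R := h.monotoneOn (norm_nonneg a) hR (by simp [R])
  have hMaz : M ‖a + z‖ ≤ M R := h.monotoneOn (norm_nonneg _) hR (norm_add_le a z)
  have haz' : ‖a + z‖ ≤ 3 * ‖z‖ := (norm_add_le a z).trans (by linarith)
  have h1 : ‖radialExt g (a + z)‖ ≤ M R * (3 * ‖z‖) ^ 2 :=
    (norm_radialExt_le h _).trans (by gcongr)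
  have h2 : ‖radialExt g a‖ ≤ M R * (2 * ‖z‖) ^ 2 :=
    (norm_radialExt_le h _).trans (by gcongr)
  have h3 : ‖fderiv ℝ (radialExt g) a z‖ ≤ 3 * M R * (2 * ‖z‖) * ‖z‖ :=
    (norm_fderiv_radialExt_apply_le h a z).trans (by gcongr)
  calc ‖radialExt g (a + z) - radialExt g a - fderiv ℝ (radialExt g) a z‖
      ≤ ‖radialExt g (a + z)‖ + ‖radialExt g a‖ + ‖fderiv ℝ (radialExt g) a z‖ :=
        (norm_sub_le _ _).trans (add_le_add_left (norm_sub_le _ _) _)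
    _ ≤ M R * (3 * ‖z‖) ^ 2 + M R * (2 * ‖z‖) ^ 2 + 3 * M R * (2 * ‖z‖) * ‖z‖ := by
        gcongr
    _ = 19 * M R * ‖z‖ ^ 2 := by ring

theorem norm_radialExt_remainder_le (h : ProfileBound g M) (a z : E) :
    ‖radialExt g (a + z) - radialExt g a - fderiv ℝ (radialExt g) a z‖
      ≤ 19 * M (‖a‖ + ‖z‖) * ‖z‖ ^ 2 := by
  rcases le_or_gt ‖a‖ (2 * ‖z‖) with haz | haz
  · exact norm_radialExt_remainder_le_of_norm_le_two_mul h haz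
  · refine (norm_radialExt_remainder_le_of_two_mul_norm_lt h haz).trans ?_
    have := h.nonneg (by positivity : 0 ≤ ‖a‖ + ‖z‖)
    gcongr
    norm_num

end GaugeExt

section RpowMajorant

variable {C₀ α₁ α₂ : ℝ}

theorem monotoneOn_rpow_majorant (hC₀ : 0 ≤ C₀) (hα₁ : 0 ≤ α₁) (hα₂ : 0 ≤ α₂) :
    MonotoneOn (fun r : ℝ => C₀ * (r ^ α₁ + r ^ α₂)) (Ici 0) := by
  intro x hx y _ hxy
  rw [mem_Ici] at hx
  dsimp only
  gcongr

theorem rpow_majorant_add_le (hC₀ : 0 ≤ C₀) (hα₁ : 0 ≤ α₁) (hα : α₁ ≤ α₂) {x y : ℝ}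
    (hx : 0 ≤ x) (hy : 0 ≤ y) :
    C₀ * ((x + y) ^ α₁ + (x + y) ^ α₂) ≤ 2 ^ α₂ * C₀ * (x ^ α₁ + x ^ α₂ + y ^ α₁ + y ^ α₂) := by
  have h₁ := add_rpow_le_two_rpow_mul_rpow_add_rpow hx hy hα₁
  have h₂ := add_rpow_le_two_rpow_mul_rpow_add_rpow hx hy (hα₁.trans hα)
  have h₁₂ : (2 : ℝ) ^ α₁ ≤ 2 ^ α₂ := Real.rpow_le_rpow_of_exponent_le one_le_two hα
  calc C₀ * ((x + y) ^ α₁ + (x + y) ^ α₂)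
      ≤ C₀ * (2 ^ α₁ * (x ^ α₁ + y ^ α₁) + 2 ^ α₂ * (x ^ α₂ + y ^ α₂)) := by gcongr
    _ ≤ C₀ * (2 ^ α₂ * (x ^ α₁ + y ^ α₁) + 2 ^ α₂ * (x ^ α₂ + y ^ α₂)) := by gcongr
    _ = 2 ^ α₂ * C₀ * (x ^ α₁ + x ^ α₂ + y ^ α₁ + y ^ α₂) := by ring

end RpowMajorant

theorem stmt_6_general (α₁ α₂ C₀ : ℝ) (hα₁ : 1/2 < α₁) (hα : α₁ ≤ α₂) (hC₀ : 0 < C₀)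
    (g : ℝ → ℝ) (hg : ContDiff ℝ 2 g)
    (hg0 : g 0 = 0) (hg'0 : deriv g 0 = 0)
    (hg'' : ∀ s : ℝ, |deriv (deriv g) s| ≤ C₀ * (|s| ^ α₁ + |s| ^ α₂))
    (G : ℂ → ℂ) (hG0 : G 0 = 0)
    (hGdef : ∀ z : ℂ, z ≠ 0 → G z = (z / (‖z‖ : ℂ)) * (g (‖z‖) : ℂ))
    (g₂ : ℂ → ℂ → ℂ)
    (hg₂ : ∀ a z : ℂ, g₂ a z = G (a + z) - G a - fderiv ℝ G a z) :
    ∃ C > 0, ∀ a z : ℂ,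
      ‖g₂ a z‖
        ≤ C * (‖a‖ ^ α₁ + ‖a‖ ^ α₂
            + ‖z‖ ^ α₁ + ‖z‖ ^ α₂) * ‖z‖ ^ (2 : ℝ) := by
  have hα₁0 : 0 ≤ α₁ := by linarith
  have hprofile : GaugeExt.ProfileBound g fun r => C₀ * (r ^ α₁ + r ^ α₂) :=
    { contDiff := hg
      map_zero := hg0
      deriv_zero := hg'0
      monotoneOn := monotoneOn_rpow_majorant hC₀.le hα₁0 (hα₁0.trans hα)
      abs_deriv2_le := fun r hr => by simpa [abs_of_nonneg hr] using hg'' r }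
  have hG : G = GaugeExt.radialExt g := funext fun w => by
    rcases eq_or_ne w 0 with rfl | hw
    · simp [hG0, GaugeExt.radialExt]
    · rw [hGdef w hw, GaugeExt.radialExt, GaugeExt.ratio, Complex.real_smul]
      push_cast
      ring
  refine ⟨19 * 2 ^ α₂ * C₀, by positivity, fun a z => ?_⟩
  rw [hg₂, hG, Real.rpow_two]
  calc _ ≤ 19 * (C₀ * ((‖a‖ + ‖z‖) ^ α₁ + (‖a‖ + ‖z‖) ^ α₂)) * ‖z‖ ^ 2 :=
        GaugeExt.norm_radialExt_remainder_le hprofile a z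
    _ ≤ 19 * (2 ^ α₂ * C₀ * (‖a‖ ^ α₁ + ‖a‖ ^ α₂ + ‖z‖ ^ α₁ + ‖z‖ ^ α₂)) * ‖z‖ ^ 2 := by
        gcongr 19 * ?_ * _
        exact rpow_majorant_add_le hC₀.le hα₁0 hα (norm_nonneg a) (norm_nonneg z)
    _ = _ := by ring

/-- With `g₂(a,z) = G(a+z) − G(a) − DG(a)[z]`, there is `C > 0` such that
`|g₂(a,z)| ≤ C(|a|^α₁ + |a|^α₂ + |z|^α₁ + |z|^α₂)·|z|²` for all `a, z ∈ ℂ`. -/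
theorem stmt_6 (α₁ α₂ C₀ : ℝ) (hα₁ : 1/2 < α₁) (hα : α₁ ≤ α₂) (hC₀ : 0 < C₀)
    (g : ℝ → ℝ) (hg : ContDiff ℝ 2 g) (hodd : ∀ s : ℝ, g (-s) = -g s)
    (hg0 : g 0 = 0) (hg'0 : deriv g 0 = 0)
    (hg'' : ∀ s : ℝ, |deriv (deriv g) s| ≤ C₀ * (|s| ^ α₁ + |s| ^ α₂))
    (G : ℂ → ℂ) (hG0 : G 0 = 0)
    (hGdef : ∀ z : ℂ, z ≠ 0 → G z = (z / (‖z‖ : ℂ)) * (g (‖z‖) : ℂ))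
    (g₂ : ℂ → ℂ → ℂ)
    (hg₂ : ∀ a z : ℂ, g₂ a z = G (a + z) - G a - fderiv ℝ G a z) :
    ∃ C > 0, ∀ a z : ℂ,
      ‖g₂ a z‖
        ≤ C * (‖a‖ ^ α₁ + ‖a‖ ^ α₂
            + ‖z‖ ^ α₁ + ‖z‖ ^ α₂) * ‖z‖ ^ (2 : ℝ) :=
  stmt_6_general α₁ α₂ C₀ hα₁ hα hC₀ g hg hg0 hg'0 hg'' G hG0 hGdef g₂ hg₂
end

section
/- Let a, c ≥ 0, 0 ≤ b < 1 and d > 1. Then there exists a constant C = C(a, b, c, d) > 0 such that for all t ≥ 0: ∫₀ᵗ (log(2 + (t − s)))^a · (t − s)^{−b} · (log(2 + s))^c · (1 + s)^{−d} ds ≤ C · (log(2 + t))^a · (1 + t)^{−b}. -/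
/-! The logarithmic weight is absorbed into a small power, `log (2 + s) ^ c ≤ K (1 + s) ^ ε`,
so `log (2 + s) ^ c (1 + s) ^ (-d) ≤ K (1 + s) ^ (-q)` for some `1 < q < d`, while
`log (2 + (t - s)) ^ a ≤ log (2 + t) ^ a`. It remains to bound
`∫₀ᵗ (t - s) ^ (-b) (1 + s) ^ (-q) ds` by a multiple of `(1 + t) ^ (-b)`.
Since `1 + t ≤ 2 max (1 + s) (t - s)`, either `(t - s) ^ (-b) ≤ 2 ^ b (1 + t) ^ (-b)`, and
`(1 + s) ^ (-q)` is integrable on `[0, ∞)`, or `(1 + s) ^ (-q) ≤ 2 ^ q (1 + t) ^ (-q)`, and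
`∫₀ᵗ (t - s) ^ (-b) ds = t ^ (1 - b) / (1 - b)` with `(1 + t) ^ (-q) t ^ (1 - b) ≤ (1 + t) ^ (-b)`.
-/

open MeasureTheory Set intervalIntegral

lemma log_rpow_le_mul_rpow {c ε x : ℝ} (hc : 0 ≤ c) (hε : 0 < ε) (hx : 1 ≤ x) :
    Real.log x ^ c ≤ ((c + 1) / ε) ^ c * x ^ ε := by
  set δ := ε / (c + 1)
  have hδ : 0 < δ := by positivity
  have hδc : δ * c ≤ ε := by
    rw [div_mul_eq_mul_div, div_le_iff₀ (by linarith)]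
    nlinarith
  calc Real.log x ^ c ≤ (δ⁻¹ * x ^ δ) ^ c := by
        gcongr
        · exact Real.log_nonneg hx
        · rw [inv_mul_eq_div]
          exact Real.log_le_rpow_div (by linarith) hδ
    _ = ((c + 1) / ε) ^ c * x ^ (δ * c) := by
        rw [Real.mul_rpow (by positivity) (by positivity), ← Real.rpow_mul (by linarith), inv_div]
    _ ≤ ((c + 1) / ε) ^ c * x ^ ε := by gcongr

lemma exists_log_two_add_rpow_mul_rpow_neg_le {c d q : ℝ} (hc : 0 ≤ c) (hqd : q < d) :
    ∃ K > 0, ∀ s : ℝ, 0 ≤ s →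
      Real.log (2 + s) ^ c * (1 + s) ^ (-d) ≤ K * (1 + s) ^ (-q) := by
  refine ⟨((c + 1) / (d - q)) ^ c * 2 ^ (d - q),
    mul_pos (Real.rpow_pos_of_pos (div_pos (by linarith) (by linarith)) _) (by positivity),
    fun s hs => ?_⟩
  have hlog := log_rpow_le_mul_rpow hc (sub_pos.2 hqd) (by linarith : (1 : ℝ) ≤ 2 + s)
  have htwo : (2 + s) ^ (d - q) ≤ 2 ^ (d - q) * (1 + s) ^ (d - q) := by
    rw [← Real.mul_rpow (by norm_num) (by linarith)]
    exact Real.rpow_le_rpow (by linarith) (by linarith) (by linarith)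
  calc Real.log (2 + s) ^ c * (1 + s) ^ (-d)
      ≤ ((c + 1) / (d - q)) ^ c * (2 ^ (d - q) * (1 + s) ^ (d - q)) * (1 + s) ^ (-d) := by
        gcongr
        exact hlog.trans (by gcongr)
    _ = ((c + 1) / (d - q)) ^ c * 2 ^ (d - q) * (1 + s) ^ (d - q + -d) := by
        rw [Real.rpow_add (by linarith)]
        ring
    _ = ((c + 1) / (d - q)) ^ c * 2 ^ (d - q) * (1 + s) ^ (-q) := by ring_nf

lemma integral_sub_rpow_neg {b : ℝ} (hb : b < 1) (t : ℝ) :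
    ∫ s in 0..t, (t - s) ^ (-b) = t ^ (1 - b) / (1 - b) := by
  rw [integral_comp_sub_left (fun x => x ^ (-b)), sub_self, sub_zero,
    integral_rpow (Or.inl (by linarith)), Real.zero_rpow (by linarith), sub_zero, neg_add_eq_sub]

lemma integral_one_add_rpow_neg_le {q : ℝ} (hq : 1 < q) {t : ℝ} (ht : 0 ≤ t) :
    ∫ s in 0..t, (1 + s) ^ (-q) ≤ 1 / (q - 1) := by
  have h0 : (0 : ℝ) ∉ uIcc 1 (1 + t) := by
    rw [uIcc_of_le (by linarith)]
    exact fun h => absurd h.1 (by norm_num)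
  rw [integral_comp_add_left (fun x => x ^ (-q)), add_zero,
    integral_rpow (Or.inr ⟨by linarith, h0⟩), Real.one_rpow,
    show -q + 1 = -(q - 1) by ring, div_neg, ← neg_div, neg_sub]
  gcongr
  linarith [Real.rpow_nonneg (by linarith : (0 : ℝ) ≤ 1 + t) (-(q - 1))]

lemma intervalIntegrable_sub_rpow_neg {b : ℝ} (hb : b < 1) (t : ℝ) :
    IntervalIntegrable (fun s => (t - s) ^ (-b)) volume 0 t := by
  simpa using (intervalIntegrable_rpow' (a := t - 0) (b := t - t)
    (by linarith : -1 < -b)).comp_sub_left t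

lemma continuousOn_one_add_rpow (q : ℝ) {t : ℝ} (ht : 0 ≤ t) :
    ContinuousOn (fun s => (1 + s) ^ q) (uIcc 0 t) := by
  refine ContinuousOn.rpow_const (by fun_prop) fun s hs => Or.inl ?_
  rw [uIcc_of_le ht] at hs
  linarith [hs.1]

lemma sub_rpow_neg_mul_one_add_rpow_neg_le {b q s t : ℝ} (hb : 0 ≤ b) (hq : 0 ≤ q)
    (hs : 0 ≤ s) (hst : s ≤ t) :
    (t - s) ^ (-b) * (1 + s) ^ (-q) ≤
      2 ^ b * (1 + t) ^ (-b) * (1 + s) ^ (-q) + 2 ^ q * (1 + t) ^ (-q) * (t - s) ^ (-b) := by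
  have half_rpow (e : ℝ) : ((1 + t) / 2) ^ (-e) = 2 ^ e * (1 + t) ^ (-e) := by
    rw [Real.div_rpow (by linarith) (by norm_num), Real.rpow_neg (by norm_num : (0 : ℝ) ≤ 2),
      div_inv_eq_mul, mul_comm]
  have hts : 0 ≤ (t - s) ^ (-b) := Real.rpow_nonneg (by linarith) _
  have hs1 : 0 ≤ (1 + s) ^ (-q) := Real.rpow_nonneg (by linarith) _
  have hscale (e : ℝ) : 0 ≤ 2 ^ e * (1 + t) ^ (-e) :=
    mul_nonneg (by positivity) (Real.rpow_nonneg (by linarith) _)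
  rcases le_total (1 + s) (t - s) with h | h
  · have key : (t - s) ^ (-b) ≤ 2 ^ b * (1 + t) ^ (-b) :=
      half_rpow b ▸ Real.rpow_le_rpow_of_nonpos (by linarith) (by linarith) (by linarith)
    exact (mul_le_mul_of_nonneg_right key hs1).trans
      (le_add_of_nonneg_right (mul_nonneg (hscale q) hts))
  · have key : (1 + s) ^ (-q) ≤ 2 ^ q * (1 + t) ^ (-q) :=
      half_rpow q ▸ Real.rpow_le_rpow_of_nonpos (by linarith) (by linarith) (by linarith)
    rw [mul_comm]
    exact (mul_le_mul_of_nonneg_right key hts).trans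
      (le_add_of_nonneg_left (mul_nonneg (hscale b) hs1))

theorem integral_sub_rpow_neg_mul_one_add_rpow_neg_le {b q t : ℝ} (hb0 : 0 ≤ b) (hb1 : b < 1)
    (hq : 1 < q) (ht : 0 ≤ t) :
    ∫ s in 0..t, (t - s) ^ (-b) * (1 + s) ^ (-q) ≤
      (2 ^ b / (q - 1) + 2 ^ q / (1 - b)) * (1 + t) ^ (-b) := by
  have hsing := intervalIntegrable_sub_rpow_neg hb1 t
  have htail := (continuousOn_one_add_rpow (-q) ht).intervalIntegrable (μ := volume)
  have hdecay : (1 + t) ^ (-q) * t ^ (1 - b) ≤ (1 + t) ^ (-b) := by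
    calc (1 + t) ^ (-q) * t ^ (1 - b) ≤ (1 + t) ^ (-q) * (1 + t) ^ (1 - b) := by
          gcongr; linarith
      _ = (1 + t) ^ (-q + (1 - b)) := (Real.rpow_add (by linarith) _ _).symm
      _ ≤ (1 + t) ^ (-b) := Real.rpow_le_rpow_of_exponent_le (by linarith) (by linarith)
  calc ∫ s in 0..t, (t - s) ^ (-b) * (1 + s) ^ (-q)
      ≤ ∫ s in 0..t,
          (2 ^ b * (1 + t) ^ (-b) * (1 + s) ^ (-q) + 2 ^ q * (1 + t) ^ (-q) * (t - s) ^ (-b)) :=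
        integral_mono_on ht (hsing.mul_continuousOn (continuousOn_one_add_rpow (-q) ht))
          ((htail.const_mul _).add (hsing.const_mul _))
          fun s hs => sub_rpow_neg_mul_one_add_rpow_neg_le hb0 (by linarith) hs.1 hs.2
    _ = 2 ^ b * (1 + t) ^ (-b) * (∫ s in 0..t, (1 + s) ^ (-q))
          + 2 ^ q * (1 + t) ^ (-q) * ∫ s in 0..t, (t - s) ^ (-b) := by
        rw [integral_add (htail.const_mul _) (hsing.const_mul _),
          intervalIntegral.integral_const_mul, intervalIntegral.integral_const_mul]
    _ ≤ 2 ^ b * (1 + t) ^ (-b) * (1 / (q - 1))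
          + 2 ^ q * (1 + t) ^ (-q) * (t ^ (1 - b) / (1 - b)) := by
        rw [integral_sub_rpow_neg hb1]
        exact add_le_add (mul_le_mul_of_nonneg_left (integral_one_add_rpow_neg_le hq ht)
          (mul_nonneg (by positivity) (Real.rpow_nonneg (by linarith) _))) le_rfl
    _ = 2 ^ b / (q - 1) * (1 + t) ^ (-b) + 2 ^ q / (1 - b) * ((1 + t) ^ (-q) * t ^ (1 - b)) := by
        ring
    _ ≤ (2 ^ b / (q - 1) + 2 ^ q / (1 - b)) * (1 + t) ^ (-b) := by
        rw [add_mul]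
        exact add_le_add le_rfl
          (mul_le_mul_of_nonneg_left hdecay (div_nonneg (by positivity) (by linarith)))

lemma convolution_integrand_nonneg (a b c d : ℝ) {s t : ℝ} (hs : 0 ≤ s) (hst : s ≤ t) :
    0 ≤ Real.log (2 + (t - s)) ^ a * (t - s) ^ (-b) * Real.log (2 + s) ^ c * (1 + s) ^ (-d) := by
  have := Real.rpow_nonneg (Real.log_nonneg (by linarith : (1 : ℝ) ≤ 2 + (t - s))) a
  have := Real.rpow_nonneg (Real.log_nonneg (by linarith : (1 : ℝ) ≤ 2 + s)) c
  have := Real.rpow_nonneg (by linarith : (0 : ℝ) ≤ t - s) (-b)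
  have := Real.rpow_nonneg (by linarith : (0 : ℝ) ≤ 1 + s) (-d)
  positivity

lemma convolution_integrand_le {a b c d q K s t : ℝ} (ha : 0 ≤ a) (hs : 0 ≤ s) (hst : s ≤ t)
    (hweight : Real.log (2 + s) ^ c * (1 + s) ^ (-d) ≤ K * (1 + s) ^ (-q)) :
    Real.log (2 + (t - s)) ^ a * (t - s) ^ (-b) * Real.log (2 + s) ^ c * (1 + s) ^ (-d)
      ≤ Real.log (2 + t) ^ a * K * ((t - s) ^ (-b) * (1 + s) ^ (-q)) := by
  have hts : 0 ≤ (t - s) ^ (-b) := Real.rpow_nonneg (by linarith) _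
  have hlog : Real.log (2 + (t - s)) ^ a ≤ Real.log (2 + t) ^ a :=
    Real.rpow_le_rpow (Real.log_nonneg (by linarith))
      (Real.log_le_log (by linarith) (by linarith)) ha
  calc Real.log (2 + (t - s)) ^ a * (t - s) ^ (-b) * Real.log (2 + s) ^ c * (1 + s) ^ (-d)
      = Real.log (2 + (t - s)) ^ a * (t - s) ^ (-b)
          * (Real.log (2 + s) ^ c * (1 + s) ^ (-d)) := by ring
    _ ≤ Real.log (2 + t) ^ a * (t - s) ^ (-b) * (K * (1 + s) ^ (-q)) :=
        mul_le_mul (mul_le_mul_of_nonneg_right hlog hts) hweight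
          (mul_nonneg (Real.rpow_nonneg (Real.log_nonneg (by linarith)) c)
            (Real.rpow_nonneg (by linarith) _))
          (mul_nonneg (Real.rpow_nonneg (Real.log_nonneg (by linarith)) a) hts)
    _ = Real.log (2 + t) ^ a * K * ((t - s) ^ (-b) * (1 + s) ^ (-q)) := by ring

/-- Convolution estimate: for `a, c ≥ 0`, `0 ≤ b < 1`, `d > 1` there is
`C > 0` with `∫₀ᵗ log^a(2+(t−s))·(t−s)^{−b}·log^c(2+s)·(1+s)^{−d} ds ≤ C·log^a(2+t)·(1+t)^{−b}`
for all `t ≥ 0`. -/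
theorem stmt_9 (a b c d : ℝ) (ha : 0 ≤ a) (hc : 0 ≤ c) (hb0 : 0 ≤ b) (hb1 : b < 1)
    (hd : 1 < d) :
    ∃ C > 0, ∀ t : ℝ, 0 ≤ t →
      (∫ s in (0:ℝ)..t,
          Real.log (2 + (t - s)) ^ a * (t - s) ^ (-b)
            * Real.log (2 + s) ^ c * (1 + s) ^ (-d))
        ≤ C * Real.log (2 + t) ^ a * (1 + t) ^ (-b) := by
  obtain ⟨q, hq, hqd⟩ : ∃ q, 1 < q ∧ q < d := ⟨(d + 1) / 2, by linarith, by linarith⟩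
  obtain ⟨K, hK, hweight⟩ := exists_log_two_add_rpow_mul_rpow_neg_le hc hqd
  set C₀ := 2 ^ b / (q - 1) + 2 ^ q / (1 - b)
  have hC₀ : 0 < C₀ :=
    add_pos (div_pos (by positivity) (by linarith)) (div_pos (by positivity) (by linarith))
  refine ⟨K * C₀, mul_pos hK hC₀, fun t ht => ?_⟩
  have hmajorant := ((intervalIntegrable_sub_rpow_neg hb1 t).mul_continuousOn
    (continuousOn_one_add_rpow (-q) ht)).const_mul (Real.log (2 + t) ^ a * K)
  calc _ ≤ ∫ s in 0..t, Real.log (2 + t) ^ a * K * ((t - s) ^ (-b) * (1 + s) ^ (-q)) := by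
        rw [integral_of_le ht, integral_of_le ht]
        exact setIntegral_mono_of_nonneg
          (fun s hs => convolution_integrand_nonneg a b c d hs.1.le hs.2)
          (fun s hs => convolution_integrand_le ha hs.1.le hs.2 (hweight s hs.1.le)) hmajorant.1
    _ = Real.log (2 + t) ^ a * K * ∫ s in 0..t, (t - s) ^ (-b) * (1 + s) ^ (-q) :=
        intervalIntegral.integral_const_mul _ _
    _ ≤ Real.log (2 + t) ^ a * K * (C₀ * (1 + t) ^ (-b)) :=
        mul_le_mul_of_nonneg_left (integral_sub_rpow_neg_mul_one_add_rpow_neg_le hb0 hb1 hq ht)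
          (mul_nonneg (Real.rpow_nonneg (Real.log_nonneg (by linarith)) a) hK.le)
    _ = K * C₀ * Real.log (2 + t) ^ a * (1 + t) ^ (-b) := by ring
end

section
/- Let 𝓗 be a complex Hilbert space and let U : ℝ → B(𝓗) be a family of bounded linear operators satisfying U(r + r') = U(r) ∘ U(r') and (U(r))* = U(−r) for all r, r' ∈ ℝ. Let s ≤ t be reals, F : [s, t] → 𝓗 continuous, m : ℝ → [0, ∞) integrable on ℝ, and φ : [s, t] → [0, ∞) square-integrable, such that |⟨F(τ), U(τ − τ')F(τ')⟩| ≤ m(τ − τ')·φ(τ)·φ(τ') for all τ, τ' ∈ [s, t]. Then ‖∫_s^t U(t − τ) F(τ) dτ‖² ≤ ‖m‖_{L¹(ℝ)} · ∫_s^t φ(τ)² dτ. -/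
/-!
Writing `g τ = U(t - τ) F(τ)`, the square `‖∫ g‖²` is bounded by the double integral of
`|⟨g τ, g τ'⟩|`, and `U(a)* U(b) = U(b - a)` turns `⟨g τ, g τ'⟩` into `⟨F τ, U(τ - τ') F τ'⟩`.
By the hypothesis and AM-GM the integrand is at most `m(τ - τ') (φ(τ)² + φ(τ')²) / 2`, and each
half is a Schur test for the convolution kernel `m(τ - τ')`, whose row and column integrals are
at most `‖m‖_{L¹}` by translation invariance of Lebesgue measure.
-/

open MeasureTheory
open scoped ENNReal NNReal InnerProductSpace

section SchurTest

variable {α β : Type*} [MeasurableSpace α] [MeasurableSpace β] {μ : Measure α} {ν : Measure β}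
  {K : α × β → ℝ≥0∞} {M : ℝ≥0∞}

-- `ψ` is `ℝ≥0`-valued so that it can be pulled out of the inner integral, where `K` need not be
-- measurable.
theorem lintegral_prod_mul_fst_le (hrow : ∀ x, ∫⁻ y, K (x, y) ∂ν ≤ M) {ψ : α → ℝ≥0}
    (hψ : AEMeasurable ψ μ) :
    ∫⁻ p, K p * ψ p.1 ∂μ.prod ν ≤ M * ∫⁻ x, ψ x ∂μ :=
  calc ∫⁻ p, K p * ψ p.1 ∂μ.prod ν ≤ ∫⁻ x, ∫⁻ y, K (x, y) * ψ x ∂ν ∂μ := lintegral_prod_le _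
    _ = ∫⁻ x, (∫⁻ y, K (x, y) ∂ν) * ψ x ∂μ := by
        simp_rw [lintegral_mul_const' _ _ ENNReal.coe_ne_top]
    _ ≤ ∫⁻ x, M * ψ x ∂μ := by gcongr with x; exact hrow x
    _ = M * ∫⁻ x, ψ x ∂μ := lintegral_const_mul'' M hψ.coe_nnreal_ennreal

theorem lintegral_prod_mul_snd_le [SFinite μ] [SFinite ν] (hcol : ∀ y, ∫⁻ x, K (x, y) ∂μ ≤ M)
    {ψ : β → ℝ≥0} (hψ : AEMeasurable ψ ν) :
    ∫⁻ p, K p * ψ p.2 ∂μ.prod ν ≤ M * ∫⁻ y, ψ y ∂ν := by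
  rw [← lintegral_prod_swap]
  exact lintegral_prod_mul_fst_le (K := K ∘ Prod.swap) hcol hψ

end SchurTest

section Convolution

variable {G : Type*} [MeasurableSpace G] [AddGroup G] [MeasurableAdd₂ G] [MeasurableNeg G]
  {ν μ : Measure G} [SFinite ν] [ν.IsAddLeftInvariant] [ν.IsAddRightInvariant] [ν.IsNegInvariant]

theorem lintegral_prod_sub_mul_add_le [SFinite μ] (hμ : μ ≤ ν) {f : G → ℝ≥0∞}
    (hf : AEMeasurable f ν) {ψ : G → ℝ≥0} (hψ : AEMeasurable ψ μ) :
    ∫⁻ p, f (p.1 - p.2) * (ψ p.1 + ψ p.2) ∂μ.prod μ ≤ 2 * (∫⁻ z, f z ∂ν) * ∫⁻ x, ψ x ∂μ := by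
  have hK : AEMeasurable (fun p : G × G => f (p.1 - p.2)) (μ.prod μ) :=
    (hf.comp_quasiMeasurePreserving (quasiMeasurePreserving_sub ν ν)).mono_measure
      (Measure.prod_mono hμ hμ)
  have hK₁ : AEMeasurable (fun p : G × G => f (p.1 - p.2) * ψ p.1) (μ.prod μ) :=
    hK.mul (hψ.coe_nnreal_ennreal.comp_quasiMeasurePreserving Measure.quasiMeasurePreserving_fst)
  have hrow (x : G) : ∫⁻ y, f (x - y) ∂μ ≤ ∫⁻ z, f z ∂ν :=
    (lintegral_mono' hμ le_rfl).trans_eq (lintegral_sub_left_eq_self f x)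
  have hcol (y : G) : ∫⁻ x, f (x - y) ∂μ ≤ ∫⁻ z, f z ∂ν :=
    (lintegral_mono' hμ le_rfl).trans_eq (lintegral_sub_right_eq_self f y)
  simp_rw [mul_add]
  rw [lintegral_add_left' hK₁, mul_assoc, two_mul]
  exact add_le_add (lintegral_prod_mul_fst_le (K := fun p => f (p.1 - p.2)) hrow hψ)
    (lintegral_prod_mul_snd_le (K := fun p => f (p.1 - p.2)) hcol hψ)

end Convolution

section InnerProduct

variable {𝕜 E : Type*} [RCLike 𝕜] [NormedAddCommGroup E] [InnerProductSpace 𝕜 E] [CompleteSpace E]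

theorem inner_apply_apply_eq_inner_apply_sub {U : ℝ → E →L[𝕜] E}
    (hUgroup : ∀ r r' : ℝ, U (r + r') = (U r).comp (U r'))
    (hUadj : ∀ r : ℝ, ContinuousLinearMap.adjoint (U r) = U (-r)) (a b : ℝ) (x y : E) :
    ⟪U a x, U b y⟫_𝕜 = ⟪x, U (b - a) y⟫_𝕜 := by
  rw [← ContinuousLinearMap.adjoint_inner_right, hUadj, ← ContinuousLinearMap.comp_apply,
    ← hUgroup, neg_add_eq_sub]

theorem enorm_integral_sq_le_lintegral_prod_enorm_inner [NormedSpace ℝ E]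
    {α : Type*} [MeasurableSpace α] {μ : Measure α} [SFinite μ] {g : α → E}
    (hg : Integrable g μ) :
    ‖∫ x, g x ∂μ‖ₑ ^ 2 ≤ ∫⁻ p, ‖⟪g p.1, g p.2⟫_𝕜‖ₑ ∂μ.prod μ := by
  set v := ∫ x, g x ∂μ
  have hinner (w : E) : ‖⟪w, v⟫_𝕜‖ₑ ≤ ∫⁻ x, ‖⟪w, g x⟫_𝕜‖ₑ ∂μ := by
    rw [← integral_inner hg]
    exact enorm_integral_le_lintegral_enorm _
  have hmeas : AEMeasurable (fun p : α × α => ‖⟪g p.1, g p.2⟫_𝕜‖ₑ) (μ.prod μ) :=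
    (hg.1.comp_fst.inner hg.1.comp_snd).enorm
  calc ‖v‖ₑ ^ 2 = ‖⟪v, v⟫_𝕜‖ₑ := by
        rw [inner_self_eq_norm_sq_to_K, enorm_pow, ← ofReal_norm, ← ofReal_norm, RCLike.norm_ofReal,
          abs_norm]
    _ ≤ ∫⁻ y, ‖⟪v, g y⟫_𝕜‖ₑ ∂μ := hinner v
    _ = ∫⁻ y, ‖⟪g y, v⟫_𝕜‖ₑ ∂μ := by simp_rw [← ofReal_norm, norm_inner_symm]
    _ ≤ ∫⁻ y, ∫⁻ x, ‖⟪g y, g x⟫_𝕜‖ₑ ∂μ ∂μ := lintegral_mono fun y => hinner (g y)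
    _ = ∫⁻ p, ‖⟪g p.1, g p.2⟫_𝕜‖ₑ ∂μ.prod μ := (lintegral_prod _ hmeas).symm

end InnerProduct

theorem two_mul_enorm_le_ofReal_mul_add_sq {E : Type*} [SeminormedAddGroup E] {z : E} {c a b : ℝ}
    (hc : 0 ≤ c) (hz : ‖z‖ ≤ c * a * b) :
    2 * ‖z‖ₑ ≤ ENNReal.ofReal c * (ENNReal.ofReal (a ^ 2) + ENNReal.ofReal (b ^ 2)) := by
  have hamgm : 2 * ‖z‖ ≤ c * (a ^ 2 + b ^ 2) := by
    nlinarith [mul_le_mul_of_nonneg_left (two_mul_le_add_sq a b) hc]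
  rw [← ENNReal.ofReal_add (sq_nonneg a) (sq_nonneg b), ← ENNReal.ofReal_mul hc, ← ofReal_norm,
    ← ENNReal.ofReal_ofNat 2, ← ENNReal.ofReal_mul zero_le_two]
  exact ENNReal.ofReal_le_ofReal hamgm

theorem stmt_12_general {𝓗 : Type*} [NormedAddCommGroup 𝓗] [InnerProductSpace ℂ 𝓗] [CompleteSpace 𝓗]
    (U : ℝ → 𝓗 →L[ℂ] 𝓗)
    (hUgroup : ∀ r r' : ℝ, U (r + r') = (U r).comp (U r'))
    (hUadj : ∀ r : ℝ, ContinuousLinearMap.adjoint (U r) = U (-r))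
    (s t : ℝ) (hst : s ≤ t)
    (F : ℝ → 𝓗)
    (m : ℝ → ℝ) (hm0 : ∀ r, 0 ≤ m r) (hm : Integrable m (volume : Measure ℝ))
    (φ : ℝ → ℝ)
    (hφ2 : IntegrableOn (fun τ => φ τ ^ 2) (Set.Icc s t) volume)
    (hbound : ∀ τ ∈ Set.Icc s t, ∀ τ' ∈ Set.Icc s t,
      ‖(inner ℂ (F τ) (U (τ - τ') (F τ')) : ℂ)‖ ≤ m (τ - τ') * φ τ * φ τ') :
    ‖∫ τ in s..t, U (t - τ) (F τ)‖ ^ 2 ≤ (∫ r, m r) * ∫ τ in s..t, φ τ ^ 2 := by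
  have hRHS : 0 ≤ (∫ r, m r) * ∫ τ in s..t, φ τ ^ 2 :=
    mul_nonneg (integral_nonneg hm0) (intervalIntegral.integral_nonneg hst fun τ _ => sq_nonneg _)
  by_cases hg : IntervalIntegrable (fun τ => U (t - τ) (F τ)) volume s t
  swap
  · simpa [intervalIntegral.integral_undef hg] using hRHS
  rw [intervalIntegrable_iff_integrableOn_Ioc_of_le hst] at hg
  simp only [intervalIntegral.integral_of_le hst] at hRHS ⊢
  have hφ2' : IntegrableOn (fun τ => φ τ ^ 2) (Set.Ioc s t) := hφ2.mono_set Set.Ioc_subset_Icc_self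
  set μ := volume.restrict (Set.Ioc s t)
  set ψ : ℝ → ℝ≥0 := fun τ => (φ τ ^ 2).toNNReal
  have hψ : AEMeasurable ψ μ := hφ2'.aemeasurable.real_toNNReal
  have hpointwise : ∀ᵐ p ∂μ.prod μ, 2 * ‖⟪U (t - p.1) (F p.1), U (t - p.2) (F p.2)⟫_ℂ‖ₑ ≤
      ENNReal.ofReal (m (p.1 - p.2)) * (ψ p.1 + ψ p.2) := by
    rw [Measure.prod_restrict, ae_restrict_iff' (measurableSet_Ioc.prod measurableSet_Ioc)]
    refine .of_forall fun p ⟨hp₁, hp₂⟩ => two_mul_enorm_le_ofReal_mul_add_sq (hm0 _) ?_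
    rw [inner_apply_apply_eq_inner_apply_sub hUgroup hUadj, sub_sub_sub_cancel_left]
    exact hbound _ (Set.Ioc_subset_Icc_self hp₁) _ (Set.Ioc_subset_Icc_self hp₂)
  have hsq : 2 * ‖∫ τ, U (t - τ) (F τ) ∂μ‖ₑ ^ 2 ≤
      2 * (ENNReal.ofReal (∫ r, m r) * ENNReal.ofReal (∫ τ, φ τ ^ 2 ∂μ)) := by
    rw [ofReal_integral_eq_lintegral_ofReal hm (.of_forall hm0),
      ofReal_integral_eq_lintegral_ofReal hφ2' (.of_forall fun τ => sq_nonneg _), ← mul_assoc]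
    calc 2 * ‖∫ τ, U (t - τ) (F τ) ∂μ‖ₑ ^ 2
        ≤ 2 * ∫⁻ p, ‖⟪U (t - p.1) (F p.1), U (t - p.2) (F p.2)⟫_ℂ‖ₑ ∂μ.prod μ := by
          gcongr; exact enorm_integral_sq_le_lintegral_prod_enorm_inner hg
      _ ≤ ∫⁻ p, ENNReal.ofReal (m (p.1 - p.2)) * (ψ p.1 + ψ p.2) ∂μ.prod μ := by
          rw [← lintegral_const_mul' _ _ ENNReal.ofNat_ne_top]
          exact lintegral_mono_ae hpointwise
      _ ≤ _ := lintegral_prod_sub_mul_add_le Measure.restrict_le_self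
          hm.aemeasurable.ennreal_ofReal hψ
  rwa [ENNReal.mul_le_mul_iff_right two_ne_zero ENNReal.ofNat_ne_top, ← ofReal_norm,
    ← ENNReal.ofReal_pow (norm_nonneg _), ← ENNReal.ofReal_mul (integral_nonneg hm0),
    ENNReal.ofReal_le_ofReal_iff hRHS] at hsq

/-- For a family `U : ℝ → B(𝓗)` with `U(r+r') = U(r)U(r')` and `U(r)* = U(−r)`,
and `F`, `m`, `φ` as described with `|⟨F(τ), U(τ−τ')F(τ')⟩| ≤ m(τ−τ')φ(τ)φ(τ')`, one has
`‖∫ₛᵗ U(t−τ)F(τ) dτ‖² ≤ ‖m‖_{L¹} ∫ₛᵗ φ(τ)² dτ`. -/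
theorem stmt_12 {𝓗 : Type*} [NormedAddCommGroup 𝓗] [InnerProductSpace ℂ 𝓗] [CompleteSpace 𝓗]
    (U : ℝ → 𝓗 →L[ℂ] 𝓗)
    (hUgroup : ∀ r r' : ℝ, U (r + r') = (U r).comp (U r'))
    (hUadj : ∀ r : ℝ, ContinuousLinearMap.adjoint (U r) = U (-r))
    (s t : ℝ) (hst : s ≤ t)
    (F : ℝ → 𝓗) (hF : ContinuousOn F (Set.Icc s t))
    (m : ℝ → ℝ) (hm0 : ∀ r, 0 ≤ m r) (hm : Integrable m (volume : Measure ℝ))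
    (φ : ℝ → ℝ) (hφ0 : ∀ τ, 0 ≤ φ τ)
    (hφ2 : IntegrableOn (fun τ => φ τ ^ 2) (Set.Icc s t) volume)
    (hbound : ∀ τ ∈ Set.Icc s t, ∀ τ' ∈ Set.Icc s t,
      ‖(inner ℂ (F τ) (U (τ - τ') (F τ')) : ℂ)‖ ≤ m (τ - τ') * φ τ * φ τ') :
    ‖∫ τ in s..t, U (t - τ) (F τ)‖ ^ 2 ≤ (∫ r, m r) * ∫ τ in s..t, φ τ ^ 2 :=
  stmt_12_general U hUgroup hUadj s t hst F m hm0 hm φ hφ2 hbound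
end
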